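/- Let P(z) = a_n ∏_{ν=1}^{n} (z − z_ν) be a complex polynomial of degree n ≥ 1 whose zeros satisfy |z_ν| ≥ k_ν ≥ 1 for 1 ≤ ν ≤ n. Set t₀ = 1 + n / (∑_{ν=1}^{n} 1/(k_ν − 1)) if k_ν > 1 for all ν, and t₀ = 1 if k_ν = 1 for some ν. Then max_{|z|=1} |P′(z)| ≤ (n/(1 + t₀)) · max_{|z|=1} |P(z)|. -/

import Mathlib

/-!
Write `Q(z) = zⁿ · conj (P (1 / conj z))`; on the unit circle `|Q'(z)| = |n P(z) - z P'(z)|` and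
`|n Q(z) - z Q'(z)| = |P'(z)|`. The bound is the sum of two inequalities on `|z| = 1`.

* `|P'(z)| + |Q'(z)| ≤ n · max |P|` for every `P` of degree at most `n`. For `|λ| > max |P|` the
  zeros of `T = P + λ zⁿ` lie in the closed unit disc, where `Re (z T'(z) / T(z)) ≥ n / 2` gives
  `|n T - z T'| ≤ |z T'|`. Choosing the argument of `λ` turns this into
  `|Q'| ≤ | |P'| - n |λ| |`; the same holds with `P` and `Q` exchanged, and the two together
  force `|P'| + |Q'| ≤ n |λ|`.
* `t₀ |P'(z)| ≤ |Q'(z)|`. With `S = ∑ z / (z - z_ν) = z P'(z) / P(z)` this reads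
  `t₀ |S| ≤ |n - S|`. Each `z / (z - z_ν)` lies in the disc with diameter
  `[-1 / (k_ν - 1), 1 / (k_ν + 1)]`, so `S` lies in the disc with diameter
  `[-∑ 1 / (k_ν - 1), ∑ 1 / (k_ν + 1)]`, and by Chebyshev's sum inequality both endpoints, hence
  the whole disc, lie in the Apollonius disc `t₀ |S| ≤ |n - S|`. If some `k_ν = 1`, then
  `t₀ = 1` and `Re S ≤ n / 2` suffices.
-/

open Polynomial Finset ComplexConjugate

lemma add_le_of_le_abs_sub_of_le_abs_sub {p q c : ℝ} (hc : 0 < c) (h₁ : q ≤ |p - c|)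
    (h₂ : p ≤ |q - c|) : p + q ≤ c := by
  rcases abs_cases (p - c) with ⟨hp, -⟩ | ⟨hp, -⟩ <;>
    rcases abs_cases (q - c) with ⟨hq, -⟩ | ⟨hq, -⟩ <;> linarith

lemma sum_one_div_add_one_mul_sum_one_div_sub_one_le {ι : Type*} [Fintype ι] {k : ι → ℝ}
    (hk : ∀ i, 1 < k i) :
    (∑ i, 1 / (k i + 1)) * ∑ i, 1 / (k i - 1)
      ≤ Fintype.card ι * ((∑ i, 1 / (k i - 1) - ∑ i, 1 / (k i + 1)) / 2) := by
  have hmono : Monovary (fun i ↦ 1 / (k i + 1)) (fun i ↦ 1 / (k i - 1)) := by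
    intro i j hij
    have hji : k j < k i := by
      simpa using (one_div_lt_one_div (sub_pos.2 (hk i)) (sub_pos.2 (hk j))).1 hij
    exact one_div_le_one_div_of_le (by linarith [hk j]) (by linarith)
  refine hmono.sum_mul_sum_le_card_mul_sum.trans_eq ?_
  rw [← sum_sub_distrib, sum_div]
  congr 1
  refine sum_congr rfl fun i _ ↦ ?_
  have h1 : k i - 1 ≠ 0 := by linarith [hk i]
  have h2 : k i + 1 ≠ 0 := by linarith [hk i]
  field_simp
  ring

namespace Complex

lemma norm_le_norm_sub_of_re_le_half {S : ℂ} {m : ℝ} (hm : 0 ≤ m) (h : S.re ≤ m / 2) :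
    ‖S‖ ≤ ‖(m : ℂ) - S‖ := by
  refine (pow_le_pow_iff_left₀ (norm_nonneg _) (norm_nonneg _) two_ne_zero).1 ?_
  simp only [Complex.sq_norm, normSq_apply, sub_re, sub_im, ofReal_re, ofReal_im]
  nlinarith

lemma norm_sub_le_norm_of_half_le_re {S : ℂ} {m : ℝ} (hm : 0 ≤ m) (h : m / 2 ≤ S.re) :
    ‖(m : ℂ) - S‖ ≤ ‖S‖ := by
  simpa using norm_le_norm_sub_of_re_le_half (S := m - S) hm (by simp; linarith)

lemma re_div_sub_le_half {w r : ℂ} (hw : ‖w‖ = 1) (hr : 1 ≤ ‖r‖) :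
    (w / (w - r)).re ≤ 1 / 2 := by
  rcases eq_or_ne w r with rfl | hne
  · simp
  have hD : 0 < normSq (w - r) := normSq_pos.2 (sub_ne_zero.2 hne)
  have hw' : normSq w = 1 := by rw [← Complex.sq_norm, hw, one_pow]
  have hr' : 1 ≤ normSq r := by rw [← Complex.sq_norm]; nlinarith
  rw [div_re, ← add_div, div_le_iff₀ hD]
  simp only [normSq_apply, sub_re, sub_im] at hw' hr' ⊢
  nlinarith

lemma half_le_re_div_sub {w r : ℂ} (hw : ‖w‖ = 1) (hr : ‖r‖ ≤ 1) (hne : w ≠ r) :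
    1 / 2 ≤ (w / (w - r)).re := by
  have hD : 0 < normSq (w - r) := normSq_pos.2 (sub_ne_zero.2 hne)
  have hw' : normSq w = 1 := by rw [← Complex.sq_norm, hw, one_pow]
  have hr' : normSq r ≤ 1 := by rw [← Complex.sq_norm]; nlinarith [norm_nonneg r]
  rw [div_re, ← add_div, le_div_iff₀ hD]
  simp only [normSq_apply, sub_re, sub_im] at hw' hr' ⊢
  nlinarith

lemma norm_div_sub_add_le {w r : ℂ} {k : ℝ} (hw : ‖w‖ = 1) (hk : 1 < k) (hr : k ≤ ‖r‖) :
    ‖w / (w - r) + ((1 / (k - 1) - 1 / (k + 1)) / 2 : ℝ)‖ ≤ (1 / (k - 1) + 1 / (k + 1)) / 2 := by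
  have hk0 : 0 < k ^ 2 - 1 := by nlinarith
  have hk1 : k - 1 ≠ 0 := by linarith
  have hk2 : k + 1 ≠ 0 := by linarith
  have hc : (1 / (k - 1) - 1 / (k + 1)) / 2 = 1 / (k ^ 2 - 1) := by field_simp; ring
  have hR : (1 / (k - 1) + 1 / (k + 1)) / 2 = k / (k ^ 2 - 1) := by field_simp; ring
  rw [hc, hR]
  have hwr : w - r ≠ 0 := by
    rintro h; rw [sub_eq_zero.1 h] at hw; linarith
  have hnum : ‖(k ^ 2 : ℂ) * w - r‖ ≤ k * ‖w - r‖ := by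
    refine (pow_le_pow_iff_left₀ (norm_nonneg _) (by positivity) two_ne_zero).1 ?_
    have hw' : normSq w = 1 := by rw [← Complex.sq_norm, hw, one_pow]
    have hr' : k ^ 2 ≤ normSq r := by rw [← Complex.sq_norm]; nlinarith
    rw [mul_pow, Complex.sq_norm, Complex.sq_norm]
    have hksq : ((k : ℂ) ^ 2).re = k ^ 2 ∧ ((k : ℂ) ^ 2).im = 0 := by
      constructor <;> norm_cast
    simp only [normSq_apply, sub_re, sub_im, mul_re, mul_im, hksq.1, hksq.2] at hw' hr' ⊢
    have e : k ^ 2 * (k ^ 2 - 1) * (w.re * w.re + w.im * w.im) = k ^ 2 * (k ^ 2 - 1) := by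
      rw [hw', mul_one]
    nlinarith [mul_nonneg hk0.le (sub_nonneg.2 hr')]
  have heq : w / (w - r) + (1 / (k ^ 2 - 1) : ℝ)
      = ((k ^ 2 : ℂ) * w - r) / ((k ^ 2 - 1) * (w - r)) := by
    have : (k : ℂ) ^ 2 - 1 ≠ 0 := by exact_mod_cast hk0.ne'
    push_cast
    field_simp
    ring
  have hk0' : ‖(k : ℂ) ^ 2 - 1‖ = k ^ 2 - 1 := by
    rw [← abs_of_pos hk0, ← Real.norm_eq_abs]; norm_cast
  rw [heq, norm_div, norm_mul, hk0', div_le_div_iff₀ (by positivity) hk0]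
  nlinarith [norm_pos_iff.2 hwr]

/-- `{S | t ‖S‖ ≤ ‖m - S‖}` is a disc symmetric about `ℝ` (bounded by an Apollonius circle), so it
contains the disc with diameter `[-α, β]` as soon as it contains `-α` and `β`. -/
lemma mul_norm_le_norm_sub_of_norm_add_le {S : ℂ} {m t α β : ℝ} (ht : 1 ≤ t)
    (hβ : 0 < β) (hβα : β ≤ α) (hS : ‖S + ((α - β) / 2 : ℝ)‖ ≤ (α + β) / 2)
    (hα : t * α ≤ m + α) (hβm : (1 + t) * β ≤ m) : t * ‖S‖ ≤ ‖(m : ℂ) - S‖ := by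
  refine (pow_le_pow_iff_left₀ (by positivity) (norm_nonneg _) two_ne_zero).1 ?_
  have hS2 := pow_le_pow_left₀ (norm_nonneg _) hS 2
  rw [Complex.sq_norm] at hS2
  rw [mul_pow, Complex.sq_norm, Complex.sq_norm]
  simp only [normSq_apply, add_re, add_im, sub_re, sub_im, ofReal_re, ofReal_im] at hS2 ⊢
  set x := S.re
  set y := S.im
  have hx := abs_le_of_sq_le_sq' (a := x + (α - β) / 2) (b := (α + β) / 2)
    (by nlinarith [sq_nonneg y]) (by linarith)
  have h1 : 0 ≤ (x + α) * ((m - β - t * β) * (m - β + t * β)) :=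
    mul_nonneg (by linarith) (mul_nonneg (by linarith) (by nlinarith))
  have h2 : 0 ≤ (β - x) * ((m + α - t * α) * (m + α + t * α)) :=
    mul_nonneg (by linarith) (mul_nonneg (by linarith) (by nlinarith))
  have h3 : 0 ≤ (t ^ 2 - 1) * (((α + β) / 2) ^ 2 - (x + (α - β) / 2) ^ 2 - y ^ 2) :=
    mul_nonneg (by nlinarith) (by nlinarith)
  nlinarith

lemma norm_sum_div_sub_le {ι : Type*} [Fintype ι] {z : ι → ℂ} (hz : ∀ i, 1 ≤ ‖z i‖) {w : ℂ}
    (hw : ‖w‖ = 1) :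
    ‖∑ i, w / (w - z i)‖ ≤ ‖(Fintype.card ι : ℂ) - ∑ i, w / (w - z i)‖ := by
  have hre : (∑ i, w / (w - z i)).re ≤ (Fintype.card ι : ℝ) / 2 := by
    rw [re_sum]
    calc ∑ i, (w / (w - z i)).re ≤ ∑ _i : ι, (1 / 2 : ℝ) :=
          sum_le_sum fun i _ ↦ re_div_sub_le_half hw (hz i)
      _ = (Fintype.card ι : ℝ) / 2 := by simp [div_eq_mul_inv]
  simpa using norm_le_norm_sub_of_re_le_half (Nat.cast_nonneg _) hre

lemma mul_norm_sum_div_sub_le {ι : Type*} [Fintype ι] {z : ι → ℂ} {k : ι → ℝ}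
    (hk : ∀ i, 1 < k i) (hzk : ∀ i, k i ≤ ‖z i‖) {w : ℂ} (hw : ‖w‖ = 1) :
    (1 + Fintype.card ι / ∑ i, 1 / (k i - 1)) * ‖∑ i, w / (w - z i)‖
      ≤ ‖(Fintype.card ι : ℂ) - ∑ i, w / (w - z i)‖ := by
  cases isEmpty_or_nonempty ι
  · simp
  set α := ∑ i, 1 / (k i - 1)
  set β := ∑ i, 1 / (k i + 1)
  have hα : 0 < α := sum_pos (fun i _ ↦ one_div_pos.2 (by linarith [hk i])) univ_nonempty
  have hβ : 0 < β := sum_pos (fun i _ ↦ one_div_pos.2 (by linarith [hk i])) univ_nonempty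
  have hβα : β ≤ α :=
    sum_le_sum fun i _ ↦ one_div_le_one_div_of_le (by linarith [hk i]) (by linarith)
  have hS : ‖∑ i, w / (w - z i) + ((α - β) / 2 : ℝ)‖ ≤ (α + β) / 2 := by
    calc ‖∑ i, w / (w - z i) + ((α - β) / 2 : ℝ)‖
        = ‖∑ i, (w / (w - z i) + ((1 / (k i - 1) - 1 / (k i + 1)) / 2 : ℝ))‖ := by
          rw [sum_add_distrib, ← ofReal_sum, ← sum_div, sum_sub_distrib]
      _ ≤ ∑ i, (1 / (k i - 1) + 1 / (k i + 1)) / 2 :=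
          (norm_sum_le _ _).trans (sum_le_sum fun i _ ↦ norm_div_sub_add_le hw (hk i) (hzk i))
      _ = (α + β) / 2 := by rw [← sum_div, sum_add_distrib]
  have hcheb : β * α ≤ Fintype.card ι * ((α - β) / 2) :=
    sum_one_div_add_one_mul_sum_one_div_sub_one_le hk
  have key := mul_norm_le_norm_sub_of_norm_add_le (m := Fintype.card ι)
    (t := 1 + Fintype.card ι / α) (le_add_of_nonneg_right (by positivity)) hβ hβα hS
    (by field_simp; linarith) ?_
  · simpa using key
  have : (1 + (1 + Fintype.card ι / α)) * β = (2 * α * β + Fintype.card ι * β) / α := by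
    field_simp; ring
  rw [this, div_le_iff₀ hα]
  linarith

end Complex

namespace Polynomial

lemma eval_mul_derivative_eq_sum_roots (P : ℂ[X]) {w : ℂ} (hw : P.eval w ≠ 0) :
    w * P.derivative.eval w = (P.roots.map fun r ↦ w / (w - r)).sum * P.eval w := by
  simp_rw [(IsAlgClosed.splits P).eval_derivative_eq_eval_mul_sum hw, div_eq_mul_one_div w,
    Multiset.sum_map_mul_left]
  ring

lemma norm_natDegree_mul_eval_sub_le {T : ℂ[X]} (hT : ∀ r ∈ T.roots, ‖r‖ ≤ 1) {u : ℂ}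
    (hu : ‖u‖ = 1) :
    ‖(T.natDegree : ℂ) * T.eval u - u * T.derivative.eval u‖ ≤ ‖u * T.derivative.eval u‖ := by
  by_cases hTu : T.eval u = 0
  · simp [hTu]
  have hne : ∀ r ∈ T.roots, u ≠ r := fun r hr h ↦ hTu (h ▸ isRoot_of_mem_roots hr)
  set S := (T.roots.map fun r ↦ u / (u - r)).sum
  have hlog : u * T.derivative.eval u = S * T.eval u := T.eval_mul_derivative_eq_sum_roots hTu
  have hre : (T.natDegree : ℝ) / 2 ≤ S.re := by
    have hle : ∀ x ∈ T.roots.map fun r ↦ (u / (u - r)).re, 1 / 2 ≤ x := by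
      simp only [Multiset.mem_map]
      rintro _ ⟨r, hr, rfl⟩
      exact Complex.half_le_re_div_sub hu (hT r hr) (hne r hr)
    have hS : S.re = (T.roots.map fun r ↦ (u / (u - r)).re).sum := by
      simpa [Multiset.map_map] using map_multiset_sum Complex.reAddGroupHom
        (T.roots.map fun r ↦ u / (u - r))
    have := Multiset.card_nsmul_le_sum hle
    rw [Multiset.card_map, nsmul_eq_mul, ← hS] at this
    rw [(IsAlgClosed.splits T).natDegree_eq_card_roots]
    linarith
  have := Complex.norm_sub_le_norm_of_half_le_re (Nat.cast_nonneg _) hre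
  rw [hlog, ← sub_mul, norm_mul, norm_mul]
  push_cast at this
  gcongr

lemma coeff_X_mul_derivative {R : Type*} [Semiring R] (p : R[X]) (i : ℕ) :
    (X * derivative p).coeff i = p.coeff i * i := by
  cases i with
  | zero => simp
  | succ i => simp [coeff_X_mul, coeff_derivative]

lemma X_mul_derivative_reflect {R : Type*} [CommRing R] {n : ℕ} {f : R[X]}
    (hf : f.natDegree ≤ n) :
    X * derivative (f.reflect n) = (C (n : R) * f - X * derivative f).reflect n := by
  ext i
  simp only [coeff_X_mul_derivative, coeff_reflect, coeff_sub, coeff_C_mul]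
  rcases le_or_gt i n with hi | hi
  · rw [revAt_le hi, Nat.cast_sub hi]
    ring
  · rw [revAt_eq_self_of_lt hi, coeff_eq_zero_of_natDegree_lt (hf.trans_lt hi)]
    ring

noncomputable def conjReflect (n : ℕ) (P : ℂ[X]) : ℂ[X] :=
  (P.map (starRingEnd ℂ)).reflect n

variable {n : ℕ} {P : ℂ[X]}

@[simp]
lemma conjReflect_conjReflect (n : ℕ) (P : ℂ[X]) : conjReflect n (conjReflect n P) = P := by
  ext i
  simp [conjReflect, reflect_map]

lemma natDegree_conjReflect_le (hP : P.natDegree ≤ n) : (conjReflect n P).natDegree ≤ n :=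
  natDegree_reflect_le.trans (max_le le_rfl ((natDegree_map_le).trans hP))

lemma coeff_conjReflect_self (n : ℕ) (P : ℂ[X]) :
    (conjReflect n P).coeff n = conj (P.coeff 0) := by
  simp [conjReflect, coeff_reflect]

lemma eval_conjReflect (hP : P.natDegree ≤ n) {w : ℂ} (hw : w ≠ 0) :
    (conjReflect n P).eval w = w ^ n * conj (P.eval (conj w)⁻¹) := by
  have : Invertible w⁻¹ := invertibleOfNonzero (inv_ne_zero hw)
  have h := eval₂_reflect_mul_pow (RingHom.id ℂ) w⁻¹ n (P.map (starRingEnd ℂ))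
    ((natDegree_map_le).trans hP)
  rw [eval₂_id, eval₂_id, invOf_eq_inv, inv_inv] at h
  have hconj : (P.map (starRingEnd ℂ)).eval w⁻¹ = conj (P.eval (conj w)⁻¹) := by
    rw [← eval_map_apply, map_inv₀, Complex.conj_conj]
  rw [conjReflect, ← hconj, ← h, inv_pow, mul_left_comm, mul_inv_cancel₀ (pow_ne_zero n hw),
    mul_one]

lemma norm_eval_conjReflect (hP : P.natDegree ≤ n) {u : ℂ} (hu : ‖u‖ = 1) :
    ‖(conjReflect n P).eval u‖ = ‖P.eval u‖ := by
  rw [eval_conjReflect hP (norm_ne_zero_iff.1 (hu.symm ▸ one_ne_zero)), ← Complex.inv_eq_conj hu]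
  simp [hu]

lemma norm_eval_derivative_conjReflect (hP : P.natDegree ≤ n) {u : ℂ} (hu : ‖u‖ = 1) :
    ‖(conjReflect n P).derivative.eval u‖ = ‖(n : ℂ) * P.eval u - u * P.derivative.eval u‖ := by
  have hG : (C (n : ℂ) * P - X * derivative P).natDegree ≤ n := by
    rw [natDegree_le_iff_coeff_eq_zero]
    intro i hi
    simp [coeff_X_mul_derivative, coeff_eq_zero_of_natDegree_lt (hP.trans_lt hi)]
  have hX : X * derivative (conjReflect n P)
      = conjReflect n (C (n : ℂ) * P - X * derivative P) := by
    rw [conjReflect, X_mul_derivative_reflect ((natDegree_map_le).trans hP), conjReflect]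
    simp [derivative_map]
  calc ‖(conjReflect n P).derivative.eval u‖
      = ‖(X * derivative (conjReflect n P)).eval u‖ := by simp [hu]
    _ = _ := by rw [hX, norm_eval_conjReflect hG hu]; simp

variable {M : ℝ}

lemma norm_eval_le_of_norm_le_one (hM : ∀ ζ : ℂ, ‖ζ‖ = 1 → ‖P.eval ζ‖ ≤ M) {ζ : ℂ}
    (hζ : ‖ζ‖ ≤ 1) : ‖P.eval ζ‖ ≤ M := by
  refine Complex.norm_le_of_forall_mem_frontier_norm_le (Metric.isBounded_ball (x := 0) (r := 1))
    P.differentiable.diffContOnCl (fun x hx ↦ hM x ?_) ?_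
  · simpa [frontier_ball (0 : ℂ) one_ne_zero] using hx
  · simpa [closure_ball (0 : ℂ) one_ne_zero] using hζ

lemma norm_eval_conjReflect_le (hP : P.natDegree ≤ n) (hM : ∀ ζ : ℂ, ‖ζ‖ = 1 → ‖P.eval ζ‖ ≤ M)
    {ζ : ℂ} (hζ : ‖ζ‖ ≤ 1) : ‖(conjReflect n P).eval ζ‖ ≤ M :=
  norm_eval_le_of_norm_le_one (fun ζ hζ ↦ (norm_eval_conjReflect hP hζ).trans_le (hM ζ hζ)) hζ

lemma norm_eval_le_mul_pow_of_one_lt_norm (hP : P.natDegree ≤ n)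
    (hM : ∀ ζ : ℂ, ‖ζ‖ = 1 → ‖P.eval ζ‖ ≤ M) {r : ℂ} (hr : 1 < ‖r‖) :
    ‖P.eval r‖ ≤ M * ‖r‖ ^ n := by
  have hr0 : r ≠ 0 := norm_pos_iff.1 (one_pos.trans hr)
  rw [← conjReflect_conjReflect n P, eval_conjReflect (natDegree_conjReflect_le hP) hr0, norm_mul,
    norm_pow, RCLike.norm_conj, mul_comm]
  gcongr
  refine norm_eval_conjReflect_le hP hM ?_
  rw [norm_inv, RCLike.norm_conj]
  exact inv_le_one_of_one_le₀ hr.le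

lemma norm_coeff_le_of_norm_eval_le (hP : P.natDegree ≤ n) (hM : ∀ ζ : ℂ, ‖ζ‖ = 1 → ‖P.eval ζ‖ ≤ M) :
    ‖P.coeff n‖ ≤ M := by
  rw [← conjReflect_conjReflect n P, coeff_conjReflect_self, RCLike.norm_conj,
    coeff_zero_eq_eval_zero]
  exact norm_eval_conjReflect_le hP hM (by simp)

lemma norm_le_one_of_mem_roots_add_C_mul_X_pow
    (hP : ∀ r : ℂ, 1 < ‖r‖ → ‖P.eval r‖ ≤ M * ‖r‖ ^ n) {l : ℂ} (hl : M < ‖l‖) {r : ℂ}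
    (hr : r ∈ (P + C l * X ^ n).roots) : ‖r‖ ≤ 1 := by
  by_contra! hr1
  have hroot : P.eval r = -(l * r ^ n) := by
    simpa [eq_neg_iff_add_eq_zero] using isRoot_of_mem_roots hr
  have := hP r hr1
  rw [hroot, norm_neg, norm_mul, norm_pow] at this
  have : 0 < ‖r‖ ^ n := pow_pos (one_pos.trans hr1) n
  nlinarith

/-- The perturbation `T = P + l Xⁿ` with `‖l‖ = L > M` has all its zeros in the closed unit
disc, and the argument of `l` is chosen so that `u T'(u)` is a real multiple of `u P'(u)`. -/
lemma norm_natCast_mul_eval_sub_le_abs (hP : P.natDegree ≤ n)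
    (hM : ∀ ζ : ℂ, ‖ζ‖ = 1 → ‖P.eval ζ‖ ≤ M) {L : ℝ} (hL : M < L) {u : ℂ} (hu : ‖u‖ = 1) :
    ‖(n : ℂ) * P.eval u - u * P.derivative.eval u‖ ≤ |‖P.derivative.eval u‖ - n * L| := by
  set v := u * P.derivative.eval u
  set e := Complex.exp (v.arg * Complex.I)
  set l : ℂ := -L * e * conj u ^ n
  have he : ‖e‖ = 1 := Complex.norm_exp_ofReal_mul_I _
  have hL0 : 0 < L := ((norm_nonneg _).trans (hM 1 norm_one)).trans_lt hL
  have hl : ‖l‖ = L := by simp [l, he, hu, abs_of_pos hL0]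
  have hcoeff : (P + C l * X ^ n).coeff n ≠ 0 := by
    rw [coeff_add, coeff_C_mul_X_pow, if_pos rfl]
    intro h
    have : ‖l‖ = ‖P.coeff n‖ := by rw [eq_neg_of_add_eq_zero_right h, norm_neg]
    linarith [norm_coeff_le_of_norm_eval_le hP hM]
  have hdeg : (P + C l * X ^ n).natDegree = n := natDegree_eq_of_le_of_coeff_ne_zero
    (natDegree_add_le_of_degree_le hP (natDegree_C_mul_X_pow_le l n)) hcoeff
  have hroots (r : ℂ) (hr : r ∈ (P + C l * X ^ n).roots) : ‖r‖ ≤ 1 :=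
    norm_le_one_of_mem_roots_add_C_mul_X_pow
      (fun _ ↦ norm_eval_le_mul_pow_of_one_lt_norm hP hM) (hl ▸ hL) hr
  have hlu : l * u ^ n = -L * e := by
    rw [mul_assoc, mul_assoc, ← mul_pow, ← Complex.inv_eq_conj hu,
      inv_mul_cancel₀ (norm_ne_zero_iff.1 (hu ▸ one_ne_zero)), one_pow, mul_one]
  have hun : u * ((n : ℂ) * u ^ (n - 1)) = n * u ^ n := by
    cases n with
    | zero => simp
    | succ m => simp [pow_succ]; ring
  have hv : v = ‖v‖ * e := (Complex.norm_mul_exp_arg_mul_I v).symm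
  have hT' : u * (P + C l * X ^ n).derivative.eval u = ((‖v‖ - n * L : ℝ) : ℂ) * e := by
    simp only [derivative_add, derivative_C_mul_X_pow, eval_add, eval_mul, eval_C, eval_pow,
      eval_X, mul_add]
    push_cast
    linear_combination l * hun + (n : ℂ) * hlu + hv
  have hT : (n : ℂ) * (P + C l * X ^ n).eval u - u * (P + C l * X ^ n).derivative.eval u
      = n * P.eval u - v := by
    rw [hT']
    simp only [eval_add, eval_mul, eval_C, eval_pow, eval_X]
    push_cast
    linear_combination (n : ℂ) * hlu + hv
  have := norm_natDegree_mul_eval_sub_le hroots hu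
  rwa [hdeg, hT, hT', norm_mul, he, mul_one, Complex.norm_real, Real.norm_eq_abs, norm_mul, hu,
    one_mul] at this

theorem norm_eval_derivative_add_norm_le (hP : P.natDegree ≤ n)
    (hM : ∀ ζ : ℂ, ‖ζ‖ = 1 → ‖P.eval ζ‖ ≤ M) {u : ℂ} (hu : ‖u‖ = 1) :
    ‖P.derivative.eval u‖ + ‖(n : ℂ) * P.eval u - u * P.derivative.eval u‖ ≤ n * M := by
  rcases Nat.eq_zero_or_pos n with rfl | hn
  · rw [eq_C_of_natDegree_le_zero hP]
    simp
  have hM0 : 0 ≤ M := (norm_nonneg _).trans (hM 1 norm_one)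
  have hQ := natDegree_conjReflect_le hP
  have hQM (ζ : ℂ) (hζ : ‖ζ‖ = 1) : ‖(conjReflect n P).eval ζ‖ ≤ M :=
    norm_eval_conjReflect_le hP hM hζ.le
  refine le_of_forall_gt_imp_ge_of_dense fun c hc ↦ ?_
  have hn' : (0 : ℝ) < n := Nat.cast_pos.2 hn
  have hL : M < c / n := by rwa [lt_div_iff₀ hn', mul_comm]
  have h₁ := norm_natCast_mul_eval_sub_le_abs hP hM hL hu
  have h₂ := norm_natCast_mul_eval_sub_le_abs hQ hQM hL hu
  rw [norm_eval_derivative_conjReflect hP hu, ← norm_eval_derivative_conjReflect hQ hu,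
    conjReflect_conjReflect] at h₂
  rw [mul_div_cancel₀ _ hn'.ne'] at h₁ h₂
  exact add_le_of_le_abs_sub_of_le_abs_sub ((by positivity : (0 : ℝ) ≤ n * M).trans_lt hc) h₁ h₂

section Product

variable {ι : Type*} [Fintype ι]

lemma eval_mul_derivative_C_mul_prod (a : ℂ) (z : ι → ℂ) {w : ℂ} (hw : ∀ i, w ≠ z i) :
    w * (C a * ∏ i, (X - C (z i))).derivative.eval w
      = (∑ i, w / (w - z i)) * (C a * ∏ i, (X - C (z i))).eval w := by
  rcases eq_or_ne a 0 with rfl | ha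
  · simp
  have hroots : (C a * ∏ i, (X - C (z i))).roots = univ.val.map z := by
    rw [roots_C_mul _ ha, prod_eq_multiset_prod]
    simpa [Multiset.map_map, Function.comp_def] using roots_multiset_prod_X_sub_C (univ.val.map z)
  have hne : (C a * ∏ i, (X - C (z i))).eval w ≠ 0 := by
    simpa [eval_prod, ha, prod_eq_zero_iff, sub_eq_zero] using hw
  rw [eval_mul_derivative_eq_sum_roots _ hne, hroots, Multiset.map_map]
  rfl

theorem mul_norm_eval_derivative_C_mul_prod_le (a : ℂ) {z : ι → ℂ} {k : ι → ℝ}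
    (hk1 : ∀ i, 1 ≤ k i) (hzk : ∀ i, k i ≤ ‖z i‖) {t₀ : ℝ}
    (ht₀ : (∀ i, 1 < k i) → t₀ = 1 + Fintype.card ι / ∑ i, 1 / (k i - 1))
    (ht₀' : (∃ i, k i = 1) → t₀ = 1) {w : ℂ} (hw : ‖w‖ = 1) :
    t₀ * ‖(C a * ∏ i, (X - C (z i))).derivative.eval w‖
      ≤ ‖(Fintype.card ι : ℂ) * (C a * ∏ i, (X - C (z i))).eval w
          - w * (C a * ∏ i, (X - C (z i))).derivative.eval w‖ := by
  set P := C a * ∏ i, (X - C (z i))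
  set S := ∑ i, w / (w - z i)
  have of_mul_norm_le (t : ℝ) (hwz : ∀ i, w ≠ z i) (ht : t * ‖S‖ ≤ ‖(Fintype.card ι : ℂ) - S‖) :
      t * ‖P.derivative.eval w‖ ≤ ‖(Fintype.card ι : ℂ) * P.eval w - w * P.derivative.eval w‖ := by
    have hlog : w * P.derivative.eval w = S * P.eval w := eval_mul_derivative_C_mul_prod a z hwz
    calc t * ‖P.derivative.eval w‖ = t * ‖S‖ * ‖P.eval w‖ := by
          rw [mul_assoc, ← norm_mul, ← hlog, norm_mul, hw, one_mul]
      _ ≤ ‖(Fintype.card ι : ℂ) - S‖ * ‖P.eval w‖ := by gcongr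
      _ = _ := by rw [hlog, ← norm_mul, sub_mul]
  by_cases hk : ∀ i, 1 < k i
  · have hwz (i : ι) : w ≠ z i := by
      rintro rfl
      linarith [(hk i).trans_le (hzk i)]
    rw [ht₀ hk]
    exact of_mul_norm_le _ hwz (Complex.mul_norm_sum_div_sub_le hk hzk hw)
  push Not at hk
  obtain ⟨i, hi⟩ := hk
  rw [ht₀' ⟨i, le_antisymm hi (hk1 i)⟩]
  by_cases hwz : ∀ i, w ≠ z i
  · exact of_mul_norm_le 1 hwz
      (by simpa using Complex.norm_sum_div_sub_le (fun i ↦ (hk1 i).trans (hzk i)) hw)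
  push Not at hwz
  obtain ⟨j, rfl⟩ := hwz
  have hPj : P.eval (z j) = 0 := by
    simp only [P, eval_mul, eval_prod, eval_sub, eval_X, eval_C]
    rw [prod_eq_zero (mem_univ j) (sub_self _), mul_zero]
  simp [hPj, hw]

end Product

end Polynomial

theorem stmt_11_general (n : ℕ) (a : ℂ) (z : Fin n → ℂ)
    (P : Polynomial ℂ)
    (hP : P = Polynomial.C a * ∏ ν, (Polynomial.X - Polynomial.C (z ν)))
    (k : Fin n → ℝ) (hk1 : ∀ ν, 1 ≤ k ν) (hzk : ∀ ν, k ν ≤ ‖z ν‖)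
    (t₀ : ℝ)
    (ht₀ : (∀ ν, 1 < k ν) → t₀ = 1 + (n : ℝ) / ∑ ν, 1 / (k ν - 1))
    (ht₀' : (∃ ν, k ν = 1) → t₀ = 1) :
    ∀ w : ℂ, ‖w‖ = 1 →
      ‖P.derivative.eval w‖ ≤
        ((n : ℝ) / (1 + t₀)) *
          sSup ((fun ζ : ℂ => ‖P.eval ζ‖) '' {ζ : ℂ | ‖ζ‖ = 1}) := by
  intro w hw
  have hdeg : P.natDegree ≤ n := by
    rw [hP]
    refine (natDegree_C_mul_le _ _).trans ?_
    rw [natDegree_prod_of_monic _ _ fun ν _ ↦ monic_X_sub_C (z ν)]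
    simp
  have hbdd : BddAbove ((fun ζ : ℂ => ‖P.eval ζ‖) '' {ζ : ℂ | ‖ζ‖ = 1}) := by
    have hsphere : {ζ : ℂ | ‖ζ‖ = 1} = Metric.sphere 0 1 := by ext; simp
    rw [hsphere]
    exact (isCompact_sphere 0 1).bddAbove_image P.continuous.norm.continuousOn
  have hA := norm_eval_derivative_add_norm_le hdeg (fun ζ hζ ↦ le_csSup hbdd ⟨ζ, hζ, rfl⟩) hw
  have hB := mul_norm_eval_derivative_C_mul_prod_le a hk1 hzk (by simpa using ht₀) ht₀' hw
  have ht1 : 1 ≤ t₀ := by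
    by_cases hk : ∀ ν, 1 < k ν
    · rw [ht₀ hk]
      exact le_add_of_nonneg_right
        (div_nonneg n.cast_nonneg (sum_nonneg fun ν _ ↦ (one_div_pos.2 (sub_pos.2 (hk ν))).le))
    push Not at hk
    obtain ⟨ν, hν⟩ := hk
    rw [ht₀' ⟨ν, le_antisymm hν (hk1 ν)⟩]
  rw [← hP, Fintype.card_fin] at hB
  rw [div_mul_eq_mul_div, le_div_iff₀ (by linarith)]
  linarith

/-- **(Govil–Qazi–Rahman).** If `P(z) = a ∏ (z - z_ν)` has degree `n ≥ 1` with
`|z_ν| ≥ k_ν ≥ 1`, then with `t₀` as defined,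
`max_{|z|=1} |P'(z)| ≤ (n/(1 + t₀)) max_{|z|=1} |P(z)|`. -/
theorem stmt_11 (n : ℕ) (hn : 1 ≤ n) (a : ℂ) (ha : a ≠ 0) (z : Fin n → ℂ)
    (P : Polynomial ℂ)
    (hP : P = Polynomial.C a * ∏ ν, (Polynomial.X - Polynomial.C (z ν)))
    (k : Fin n → ℝ) (hk1 : ∀ ν, 1 ≤ k ν) (hzk : ∀ ν, k ν ≤ ‖z ν‖)
    (t₀ : ℝ)
    (ht₀ : (∀ ν, 1 < k ν) → t₀ = 1 + (n : ℝ) / ∑ ν, 1 / (k ν - 1))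
    (ht₀' : (∃ ν, k ν = 1) → t₀ = 1) :
    ∀ w : ℂ, ‖w‖ = 1 →
      ‖P.derivative.eval w‖ ≤
        ((n : ℝ) / (1 + t₀)) *
          sSup ((fun ζ : ℂ => ‖P.eval ζ‖) '' {ζ : ℂ | ‖ζ‖ = 1}) :=
  stmt_11_general n a z P hP k hk1 hzk t₀ ht₀ ht₀'
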